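/- arXiv:2503.10764 — 3 statements merged into one kernel-verified Lean document; each statement's English description precedes it below -/
import Mathlib

section
/- If the reduced density matrix ρ_{A₁⋯A_{n−1}} of a pure state ψ on A₁ ⊗ ⋯ ⊗ Aₙ is (n−1)-partite non-chiral, then ψ is n-partite non-chiral: there exist local unitaries U_{A₁},…,U_{Aₙ} with (⊗ᵢ U_{Aᵢ})ψ = ψ* (using Uhlmann's theorem to supply the unitary on Aₙ). -/
open Matrix Kronecker BigOperators
open scoped ComplexOrder

noncomputable section

/-- Entrywise complex conjugation of a matrix (in the fixed basis). -/
def conjM {α : Type*} (ρ : Matrix α α ℂ) : Matrix α α ℂ := ρ.map (starRingEnd ℂ)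

/-- A matrix is unitary. -/
def IsUnitary {α : Type*} [Fintype α] [DecidableEq α] (U : Matrix α α ℂ) : Prop :=
  U * Uᴴ = 1 ∧ Uᴴ * U = 1

/-- A density matrix: positive semidefinite with unit trace. -/
def IsDensity {α : Type*} [Fintype α] [DecidableEq α] (ρ : Matrix α α ℂ) : Prop :=
  ρ.PosSemidef ∧ ρ.trace = 1

/-- Partial trace over the second tensor factor. -/
def traceB {α β : Type*} [Fintype β] (ρ : Matrix (α × β) (α × β) ℂ) : Matrix α α ℂ :=
  fun a a' => ∑ b, ρ (a, b) (a', b)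

/-- Partial trace over the first tensor factor. -/
def traceA {α β : Type*} [Fintype α] (ρ : Matrix (α × β) (α × β) ℂ) : Matrix β β ℂ :=
  fun b b' => ∑ a, ρ (a, b) (a, b')

/-- The tensor product of a family of local operators. -/
def piTensor {k : ℕ} {d : Fin k → ℕ} (U : (i : Fin k) → Matrix (Fin (d i)) (Fin (d i)) ℂ) :
    Matrix ((i : Fin k) → Fin (d i)) ((i : Fin k) → Fin (d i)) ℂ :=
  fun x y => ∏ i, U i (x i) (y i)

lemma toEuclideanLin_mul' {A B C : Type*} [Fintype A] [Fintype B] [Fintype C]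
    [DecidableEq B] [DecidableEq C] (X : Matrix A B ℂ) (Y : Matrix B C ℂ) :
    Matrix.toEuclideanLin (X * Y) = (Matrix.toEuclideanLin X).comp (Matrix.toEuclideanLin Y) := by
  apply LinearMap.ext; intro v
  simp [Matrix.toEuclideanLin_apply, Matrix.mulVec_mulVec]

lemma exists_unitary_of_gram {A B : Type*} [Fintype A] [Fintype B] [DecidableEq A] [DecidableEq B]
    (X Y : Matrix A B ℂ) (h : X * Xᴴ = Y * Yᴴ) :
    ∃ W : Matrix B B ℂ, (W * Wᴴ = 1 ∧ Wᴴ * W = 1) ∧ X * W = Y := by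
  classical
  set f : EuclideanSpace ℂ A →ₗ[ℂ] EuclideanSpace ℂ B := Matrix.toEuclideanLin Xᴴ with hf
  set g : EuclideanSpace ℂ A →ₗ[ℂ] EuclideanSpace ℂ B := Matrix.toEuclideanLin Yᴴ with hg
  have key : ∀ u : EuclideanSpace ℂ A, (inner ℂ (f u) (f u) : ℂ) = inner ℂ (g u) (g u) := by
    intro u
    have hfx : f = LinearMap.adjoint (Matrix.toEuclideanLin X) :=
      Matrix.toEuclideanLin_conjTranspose_eq_adjoint X
    have hgy : g = LinearMap.adjoint (Matrix.toEuclideanLin Y) :=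
      Matrix.toEuclideanLin_conjTranspose_eq_adjoint Y
    have h1 : (inner ℂ (f u) (f u) : ℂ) = inner ℂ u (Matrix.toEuclideanLin (X * Xᴴ) u) := by
      conv_lhs => rw [hfx, LinearMap.adjoint_inner_left]
      rw [toEuclideanLin_mul', ← Matrix.toEuclideanLin_conjTranspose_eq_adjoint]
      rfl
    have h2 : (inner ℂ (g u) (g u) : ℂ) = inner ℂ u (Matrix.toEuclideanLin (Y * Yᴴ) u) := by
      conv_lhs => rw [hgy, LinearMap.adjoint_inner_left]
      rw [toEuclideanLin_mul', ← Matrix.toEuclideanLin_conjTranspose_eq_adjoint]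
      rfl
    rw [h1, h2, h]
  have hnorm : ∀ u, ‖g u‖ = ‖f u‖ := by
    intro u
    rw [@norm_eq_sqrt_re_inner ℂ, @norm_eq_sqrt_re_inner ℂ, key u]
  -- kernel inclusion
  have hker : LinearMap.ker f ≤ LinearMap.ker g := by
    intro u hu
    rw [LinearMap.mem_ker] at hu ⊢
    have := hnorm u
    rw [hu, norm_zero] at this
    exact norm_eq_zero.mp this
  -- the isometry on the range of f
  let h₀ : (EuclideanSpace ℂ A ⧸ LinearMap.ker f) →ₗ[ℂ] EuclideanSpace ℂ B :=
    (LinearMap.ker f).liftQ g hker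
  let e := f.quotKerEquivRange
  let hmap : (LinearMap.range f : Submodule ℂ (EuclideanSpace ℂ B)) →ₗ[ℂ] EuclideanSpace ℂ B :=
    h₀ ∘ₗ (e.symm : _ →ₗ[ℂ] _)
  have hmap_apply : ∀ u : EuclideanSpace ℂ A,
      hmap ⟨f u, LinearMap.mem_range_self f u⟩ = g u := by
    intro u
    have h1 : e (Submodule.Quotient.mk u) = ⟨f u, LinearMap.mem_range_self f u⟩ :=
      Subtype.ext (f.quotKerEquivRange_apply_mk u)
    have h2 : e.symm ⟨f u, LinearMap.mem_range_self f u⟩ = Submodule.Quotient.mk u := by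
      rw [← h1]; exact e.symm_apply_apply _
    simp only [hmap, LinearMap.comp_apply, LinearEquiv.coe_coe, h2]
    rfl
  have hiso : ∀ s : (LinearMap.range f : Submodule ℂ (EuclideanSpace ℂ B)), ‖hmap s‖ = ‖s‖ := by
    rintro ⟨s, hs⟩
    obtain ⟨u, rfl⟩ := hs
    rw [hmap_apply u]
    exact hnorm u
  let L : (LinearMap.range f : Submodule ℂ (EuclideanSpace ℂ B)) →ₗᵢ[ℂ] EuclideanSpace ℂ B :=
    ⟨hmap, hiso⟩
  let W' := L.extend
  have hext : ∀ u : EuclideanSpace ℂ A, W' (f u) = g u := by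
    intro u
    have := L.extend_apply ⟨f u, LinearMap.mem_range_self f u⟩
    rw [← hmap_apply u]
    exact this
  -- the matrix of W'
  set W₀ : Matrix B B ℂ := Matrix.toEuclideanLin.symm W'.toLinearMap with hW₀
  have hW₀lin : Matrix.toEuclideanLin W₀ = W'.toLinearMap := Matrix.toEuclideanLin.apply_symm_apply _
  have hunit : W₀ᴴ * W₀ = 1 := by
    apply Matrix.toEuclideanLin.injective
    rw [toEuclideanLin_mul', hW₀lin, Matrix.toEuclideanLin_conjTranspose_eq_adjoint, hW₀lin]
    ext u : 1
    apply ext_inner_left ℂ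
    intro v
    rw [LinearMap.comp_apply, LinearMap.adjoint_inner_right]
    simp only [LinearIsometry.coe_toLinearMap]
    rw [W'.inner_map_map]
    simp [Matrix.toEuclideanLin_apply, Matrix.one_mulVec]
  have hunit' : W₀ * W₀ᴴ = 1 := mul_eq_one_comm.mp hunit
  have hXW : W₀ * Xᴴ = Yᴴ := by
    apply Matrix.toEuclideanLin.injective
    rw [toEuclideanLin_mul', hW₀lin]
    ext u : 1
    exact hext u
  refine ⟨W₀ᴴ, ⟨?_, ?_⟩, ?_⟩
  · simpa using hunit
  · simpa using hunit'
  · calc X * W₀ᴴ = (W₀ * Xᴴ)ᴴ := by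
          rw [Matrix.conjTranspose_mul, Matrix.conjTranspose_conjTranspose]
      _ = Y := by rw [hXW, Matrix.conjTranspose_conjTranspose]

lemma piTensor_mul {k : ℕ} {d : Fin k → ℕ}
    (U V : (i : Fin k) → Matrix (Fin (d i)) (Fin (d i)) ℂ) :
    piTensor U * piTensor V = piTensor (fun i => U i * V i) := by
  funext x z
  simp only [piTensor, Matrix.mul_apply]
  rw [Finset.prod_univ_sum, Fintype.piFinset_univ]
  exact Finset.sum_congr rfl fun y _ => (Finset.prod_mul_distrib).symm

lemma piTensor_one {k : ℕ} {d : Fin k → ℕ} :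
    piTensor (fun i => (1 : Matrix (Fin (d i)) (Fin (d i)) ℂ)) = 1 := by
  funext x y
  simp only [piTensor]
  by_cases h : x = y
  · subst h
    simp [Matrix.one_apply]
  · rw [Matrix.one_apply_ne h]
    obtain ⟨i, hi⟩ := Function.ne_iff.mp h
    exact Finset.prod_eq_zero (Finset.mem_univ i) (Matrix.one_apply_ne hi)

lemma piTensor_conjTranspose {k : ℕ} {d : Fin k → ℕ}
    (U : (i : Fin k) → Matrix (Fin (d i)) (Fin (d i)) ℂ) :
    (piTensor U)ᴴ = piTensor (fun i => (U i)ᴴ) := by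
  funext x y
  simp [piTensor, Matrix.conjTranspose_apply, star_prod]

lemma piTensor_unitary {k : ℕ} {d : Fin k → ℕ}
    (U : (i : Fin k) → Matrix (Fin (d i)) (Fin (d i)) ℂ)
    (hU : ∀ i, IsUnitary (U i)) : IsUnitary (piTensor U) := by
  constructor
  · rw [piTensor_conjTranspose, piTensor_mul]
    rw [show (fun i => U i * (U i)ᴴ) = fun i => (1 : Matrix (Fin (d i)) (Fin (d i)) ℂ) from
      funext fun i => (hU i).1]
    exact piTensor_one
  · rw [piTensor_conjTranspose, piTensor_mul]
    rw [show (fun i => (U i)ᴴ * U i) = fun i => (1 : Matrix (Fin (d i)) (Fin (d i)) ℂ) from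
      funext fun i => (hU i).2]
    exact piTensor_one


/-- if the reduced density matrix of a pure state `ψ` on the first `k`
subsystems is `k`-partite non-chiral, then `ψ` is `(k+1)`-partite non-chiral:
`(⊗ᵢ Uᵢ) ⊗ W` maps `ψ` to `ψ*` for suitable local unitaries. -/
theorem stmt_3 {k m : ℕ} {d : Fin k → ℕ}
    (ψ : (((i : Fin k) → Fin (d i)) × Fin m) → ℂ)
    (hψ : ∑ x, ‖ψ x‖ ^ 2 = 1)
    (hred : ∃ V : (i : Fin k) → Matrix (Fin (d i)) (Fin (d i)) ℂ,
      (∀ i, IsUnitary (V i)) ∧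
      piTensor V * traceB (Matrix.vecMulVec ψ (star ψ)) * (piTensor V)ᴴ
        = conjM (traceB (Matrix.vecMulVec ψ (star ψ)))) :
    ∃ (U : (i : Fin k) → Matrix (Fin (d i)) (Fin (d i)) ℂ)
      (W : Matrix (Fin m) (Fin m) ℂ),
      (∀ i, IsUnitary (U i)) ∧ IsUnitary W ∧
      (piTensor U ⊗ₖ W).mulVec ψ = fun x => starRingEnd ℂ (ψ x) := by
  classical
  obtain ⟨V, hVu, hVρ⟩ := hred
  set M : Matrix ((i : Fin k) → Fin (d i)) (Fin m) ℂ :=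
    Matrix.of (fun a b => ψ (a, b)) with hM
  have hρ : traceB (Matrix.vecMulVec ψ (star ψ)) = M * Mᴴ := by
    funext a a'
    simp only [traceB, Matrix.vecMulVec_apply, Matrix.mul_apply, Matrix.conjTranspose_apply,
      hM, Matrix.of_apply, Pi.star_apply]
  set N : Matrix ((i : Fin k) → Fin (d i)) (Fin m) ℂ := M.map (starRingEnd ℂ) with hN
  have hconj : conjM (M * Mᴴ) = N * Nᴴ := by
    funext a a'
    simp only [conjM, Matrix.map_apply, Matrix.mul_apply, Matrix.conjTranspose_apply, hN,
      map_sum]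
    refine Finset.sum_congr rfl fun b _ => ?_
    simp only [RCLike.star_def, _root_.map_mul, Complex.conj_conj]
  set X : Matrix ((i : Fin k) → Fin (d i)) (Fin m) ℂ := piTensor V * M with hX
  have hgram : X * Xᴴ = N * Nᴴ := by
    have h1 : X * Xᴴ = piTensor V * traceB (Matrix.vecMulVec ψ (star ψ)) * (piTensor V)ᴴ := by
      rw [hX, Matrix.conjTranspose_mul, hρ]
      simp only [Matrix.mul_assoc]
    rw [h1, hVρ, hρ, hconj]
  obtain ⟨W, ⟨hW1, hW2⟩, hXW⟩ := exists_unitary_of_gram X N hgram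
  refine ⟨V, Wᵀ, hVu, ⟨?_, ?_⟩, ?_⟩
  · have hTc : (Wᵀ)ᴴ = (Wᴴ)ᵀ := rfl
    rw [hTc, ← Matrix.transpose_mul, hW2, Matrix.transpose_one]
  · have hTc : (Wᵀ)ᴴ = (Wᴴ)ᵀ := rfl
    rw [hTc, ← Matrix.transpose_mul, hW1, Matrix.transpose_one]
  · funext ⟨a, b⟩
    have this1 : (X * W) a b = starRingEnd ℂ (ψ (a, b)) := by rw [hXW]; rfl
    rw [← this1, hX]
    simp only [Matrix.mulVec, dotProduct, Matrix.mul_apply,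
      Matrix.kroneckerMap_apply, Matrix.transpose_apply]
    rw [Fintype.sum_prod_type]
    rw [Finset.sum_comm]
    refine Finset.sum_congr rfl fun b' _ => ?_
    rw [Finset.sum_mul]
    refine Finset.sum_congr rfl fun a' _ => ?_
    simp only [hM, Matrix.of_apply]
    ring
end
end

section
/- The quantity J₃(ρ_{AB}) = i Tr(ρ_{AB} [[K_{AB}, [K_{AB}, K_A]], K_B]) is real, additive under tensor products, invariant under local unitaries, and odd under complex conjugation; in particular it vanishes on bipartite non-chiral states. -/
set_option linter.unusedSectionVars false
set_option maxHeartbeats 1000000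


open Matrix Kronecker BigOperators
open scoped ComplexOrder

noncomputable section

/-- Commutator of matrices. -/
def commM {α : Type*} [Fintype α] (X Y : Matrix α α ℂ) : Matrix α α ℂ := X * Y - Y * X

/-- Anticommutator of matrices. -/
def acommM {α : Type*} [Fintype α] (X Y : Matrix α α ℂ) : Matrix α α ℂ := X * Y + Y * X

/-- `J₃(ρ_AB) = i Tr(ρ_AB [[K_AB, [K_AB, K_A]], K_B])`, written in terms of the modular
Hamiltonians `K_A, K_B, K_AB` (lifted to the full space). -/
def J3 {a b : Type} [Fintype a] [Fintype b] [DecidableEq a] [DecidableEq b]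
    (ρ : Matrix (a × b) (a × b) ℂ) (KA : Matrix a a ℂ) (KB : Matrix b b ℂ)
    (KAB : Matrix (a × b) (a × b) ℂ) : ℂ :=
  Complex.I *
    (ρ * commM (commM KAB (commM KAB (KA ⊗ₖ (1 : Matrix b b ℂ)))) ((1 : Matrix a a ℂ) ⊗ₖ KB)).trace

section helpers
variable {n m : Type*} [Fintype n] [DecidableEq n] [Fintype m] [DecidableEq m]

variable {n m : Type*} [Fintype n] [DecidableEq n] [Fintype m] [DecidableEq m]

lemma conjM_mul (X Y : Matrix n n ℂ) : conjM (X * Y) = conjM X * conjM Y :=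
  Matrix.map_mul

lemma conjM_one : conjM (1 : Matrix n n ℂ) = 1 := Matrix.map_one _ (map_zero _) (map_one _)

lemma conjM_sub (X Y : Matrix n n ℂ) : conjM (X - Y) = conjM X - conjM Y := by
  ext i j; simp [conjM]

lemma conjM_add (X Y : Matrix n n ℂ) : conjM (X + Y) = conjM X + conjM Y := by
  ext i j; simp [conjM]

lemma conjM_kron (X : Matrix n n ℂ) (Y : Matrix m m ℂ) :
    conjM (X ⊗ₖ Y) = conjM X ⊗ₖ conjM Y := by
  ext ⟨i, j⟩ ⟨k, l⟩
  simp [conjM, kroneckerMap_apply]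

lemma trace_conjM (X : Matrix n n ℂ) : (conjM X).trace = (starRingEnd ℂ) X.trace := by
  simp [conjM, Matrix.trace, Matrix.diag, map_sum]

lemma kron_conjTranspose (X : Matrix n n ℂ) (Y : Matrix m m ℂ) :
    (X ⊗ₖ Y)ᴴ = Xᴴ ⊗ₖ Yᴴ := by
  ext ⟨i, j⟩ ⟨k, l⟩
  simp [conjTranspose_apply, kroneckerMap_apply, _root_.map_mul]

lemma commM_conjT_HH {X Y : Matrix n n ℂ} (hX : Xᴴ = X) (hY : Yᴴ = Y) :
    (commM X Y)ᴴ = -(commM X Y) := by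
  simp [commM, conjTranspose_sub, conjTranspose_mul, hX, hY]

lemma commM_conjT_HA {X Y : Matrix n n ℂ} (hX : Xᴴ = X) (hY : Yᴴ = -Y) :
    (commM X Y)ᴴ = commM X Y := by
  simp only [commM, conjTranspose_sub, conjTranspose_mul, hX, hY]
  simp only [mul_neg, neg_mul, sub_neg_eq_add]
  abel

lemma commM_conjU {V X Y : Matrix n n ℂ} (hV : Vᴴ * V = 1) :
    commM (V * X * Vᴴ) (V * Y * Vᴴ) = V * commM X Y * Vᴴ := by
  have h : ∀ A B : Matrix n n ℂ, (V * A * Vᴴ) * (V * B * Vᴴ) = V * (A * B) * Vᴴ := by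
    intro A B
    calc (V * A * Vᴴ) * (V * B * Vᴴ) = V * A * (Vᴴ * V) * B * Vᴴ := by
          simp only [Matrix.mul_assoc]
    _ = V * (A * B) * Vᴴ := by rw [hV]; simp only [Matrix.mul_one, Matrix.mul_assoc]
  simp only [commM, h, Matrix.mul_sub, Matrix.sub_mul]

lemma sub_kron (A B : Matrix n n ℂ) (C : Matrix m m ℂ) :
    (A - B) ⊗ₖ C = A ⊗ₖ C - B ⊗ₖ C := by
  ext ⟨i, j⟩ ⟨k, l⟩; simp [kroneckerMap_apply, sub_mul]

lemma kron_sub (A : Matrix n n ℂ) (B C : Matrix m m ℂ) :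
    A ⊗ₖ (B - C) = A ⊗ₖ B - A ⊗ₖ C := by
  ext ⟨i, j⟩ ⟨k, l⟩; simp [kroneckerMap_apply, mul_sub]

lemma comm_lift (X Y : Matrix n n ℂ) (X' Y' : Matrix m m ℂ) :
    commM (X ⊗ₖ (1 : Matrix m m ℂ) + (1 : Matrix n n ℂ) ⊗ₖ X')
          (Y ⊗ₖ (1 : Matrix m m ℂ) + (1 : Matrix n n ℂ) ⊗ₖ Y')
      = commM X Y ⊗ₖ (1 : Matrix m m ℂ) + (1 : Matrix n n ℂ) ⊗ₖ commM X' Y' := by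
  simp only [commM, Matrix.add_mul, Matrix.mul_add, ← mul_kronecker_mul, Matrix.mul_one,
    Matrix.one_mul, sub_kron, kron_sub]
  abel

lemma trace_reindex {e : n ≃ m} (M : Matrix n n ℂ) :
    (Matrix.reindex e e M).trace = M.trace := by
  simp only [Matrix.trace, Matrix.diag, Matrix.reindex_apply, Matrix.submatrix_apply]
  exact Fintype.sum_equiv e.symm _ _ (fun i => rfl)

lemma reindex_mul {e : n ≃ m} (A B : Matrix n n ℂ) :
    Matrix.reindex e e (A * B) = Matrix.reindex e e A * Matrix.reindex e e B := by
  simp only [Matrix.reindex_apply, Matrix.submatrix_mul_equiv]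

lemma reindex_commM {e : n ≃ m} (A B : Matrix n n ℂ) :
    Matrix.reindex e e (commM A B) = commM (Matrix.reindex e e A) (Matrix.reindex e e B) := by
  simp only [commM, ← reindex_mul, Matrix.reindex_apply]
  ext i j
  simp [Matrix.submatrix_apply, Matrix.sub_apply]

lemma traceB_lmul (X : Matrix n n ℂ) (M : Matrix (n × m) (n × m) ℂ) :
    traceB ((X ⊗ₖ (1 : Matrix m m ℂ)) * M) = X * traceB M := by
  ext x u
  simp only [traceB, Matrix.mul_apply, Fintype.sum_prod_type, kroneckerMap_apply,
    Matrix.one_apply]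
  rw [Finset.sum_comm]
  refine Finset.sum_congr rfl fun p _ => ?_
  simp only [mul_ite, mul_zero, mul_one, ite_mul, zero_mul, Finset.sum_ite_eq,
    Finset.mem_univ, if_true]
  rw [Finset.mul_sum]

lemma traceB_rmul (X : Matrix n n ℂ) (M : Matrix (n × m) (n × m) ℂ) :
    traceB (M * (X ⊗ₖ (1 : Matrix m m ℂ))) = traceB M * X := by
  ext x u
  simp only [traceB, Matrix.mul_apply, Fintype.sum_prod_type, kroneckerMap_apply,
    Matrix.one_apply]
  rw [Finset.sum_comm]
  refine Finset.sum_congr rfl fun p _ => ?_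
  simp only [mul_ite, mul_zero, mul_one, ite_mul, zero_mul, Finset.sum_ite_eq,
    Finset.mem_univ, if_true, Finset.sum_mul]
  simp [Finset.sum_ite_eq, Finset.sum_ite_eq']

lemma traceB_cyc (W : Matrix m m ℂ) (M : Matrix (n × m) (n × m) ℂ) :
    traceB (((1 : Matrix n n ℂ) ⊗ₖ W) * M) = traceB (M * ((1 : Matrix n n ℂ) ⊗ₖ W)) := by
  ext x u
  simp only [traceB, Matrix.mul_apply, Fintype.sum_prod_type, kroneckerMap_apply,
    Matrix.one_apply, ite_mul, zero_mul, one_mul, mul_ite, mul_zero, mul_one]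
  simp only [Finset.sum_ite_irrel, Finset.sum_const_zero, Finset.sum_ite_eq,
    Finset.sum_ite_eq', Finset.mem_univ, if_true]
  rw [Finset.sum_comm]
  exact Finset.sum_congr rfl fun q _ => Finset.sum_congr rfl fun b _ => mul_comm _ _

lemma traceA_rmul' (Y : Matrix m m ℂ) (M : Matrix (n × m) (n × m) ℂ) :
    traceA (((1 : Matrix n n ℂ) ⊗ₖ Y) * M) = Y * traceA M := by
  ext x u
  simp only [traceA, Matrix.mul_apply, Fintype.sum_prod_type, kroneckerMap_apply,
    Matrix.one_apply, ite_mul, zero_mul, one_mul, mul_ite, mul_zero, mul_one]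
  simp only [Finset.sum_ite_irrel, Finset.sum_const_zero, Finset.sum_ite_eq,
    Finset.sum_ite_eq', Finset.mem_univ, if_true]
  rw [Finset.sum_comm]
  simp [Finset.mul_sum]

lemma traceA_lmul' (Y : Matrix m m ℂ) (M : Matrix (n × m) (n × m) ℂ) :
    traceA (M * ((1 : Matrix n n ℂ) ⊗ₖ Y)) = traceA M * Y := by
  ext x u
  simp only [traceA, Matrix.mul_apply, Fintype.sum_prod_type, kroneckerMap_apply,
    Matrix.one_apply, ite_mul, zero_mul, one_mul, mul_ite, mul_zero, mul_one]
  simp only [Finset.sum_ite_irrel, Finset.sum_const_zero, Finset.sum_ite_eq,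
    Finset.sum_ite_eq', Finset.mem_univ, if_true]
  rw [Finset.sum_comm]
  simp [Finset.sum_mul]

lemma traceA_cyc' (X : Matrix n n ℂ) (M : Matrix (n × m) (n × m) ℂ) :
    traceA ((X ⊗ₖ (1 : Matrix m m ℂ)) * M) = traceA (M * (X ⊗ₖ (1 : Matrix m m ℂ))) := by
  ext x u
  simp only [traceA, Matrix.mul_apply, Fintype.sum_prod_type, kroneckerMap_apply,
    Matrix.one_apply, ite_mul, zero_mul, one_mul, mul_ite, mul_zero, mul_one]
  simp only [Finset.sum_ite_irrel, Finset.sum_const_zero, Finset.sum_ite_eq,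
    Finset.sum_ite_eq', Finset.mem_univ, if_true]
  rw [Finset.sum_comm]
  exact Finset.sum_congr rfl fun q _ => Finset.sum_congr rfl fun b _ => mul_comm _ _

section lifts
variable {a b a' b' : Type} [Fintype a] [Fintype b] [DecidableEq a] [DecidableEq b]
    [Fintype a'] [Fintype b'] [DecidableEq a'] [DecidableEq b']

lemma ite_ite_mul (p q : Prop) [Decidable p] [Decidable q] :
    (if p then (if q then (1 : ℂ) else 0) else 0)
      = (if p then (1 : ℂ) else 0) * (if q then (1 : ℂ) else 0) := by
  by_cases hp : p <;> by_cases hq : q <;> simp [hp, hq]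

lemma liftA_reindex (KA : Matrix a a ℂ) (LA : Matrix a' a' ℂ) :
    (KA ⊗ₖ (1 : Matrix a' a' ℂ) + (1 : Matrix a a ℂ) ⊗ₖ LA) ⊗ₖ (1 : Matrix (b × b') (b × b') ℂ)
      = Matrix.reindex (Equiv.prodProdProdComm a b a' b') (Equiv.prodProdProdComm a b a' b')
          ((KA ⊗ₖ (1 : Matrix b b ℂ)) ⊗ₖ (1 : Matrix (a' × b') (a' × b') ℂ)
            + (1 : Matrix (a × b) (a × b) ℂ) ⊗ₖ (LA ⊗ₖ (1 : Matrix b' b' ℂ))) := by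
  ext ⟨⟨x, x'⟩, ⟨y, y'⟩⟩ ⟨⟨u, u'⟩, ⟨v, v'⟩⟩
  simp only [Matrix.reindex_apply, Matrix.submatrix_apply, Equiv.prodProdProdComm_symm,
    Equiv.prodProdProdComm_apply, Matrix.add_apply, kroneckerMap_apply, Matrix.one_apply,
    Prod.mk.injEq, ite_and, Prod.swap_prod_mk, ite_ite_mul]
  ring

lemma liftB_reindex (KB : Matrix b b ℂ) (LB : Matrix b' b' ℂ) :
    (1 : Matrix (a × a') (a × a') ℂ) ⊗ₖ (KB ⊗ₖ (1 : Matrix b' b' ℂ) + (1 : Matrix b b ℂ) ⊗ₖ LB)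
      = Matrix.reindex (Equiv.prodProdProdComm a b a' b') (Equiv.prodProdProdComm a b a' b')
          (((1 : Matrix a a ℂ) ⊗ₖ KB) ⊗ₖ (1 : Matrix (a' × b') (a' × b') ℂ)
            + (1 : Matrix (a × b) (a × b) ℂ) ⊗ₖ ((1 : Matrix a' a' ℂ) ⊗ₖ LB)) := by
  ext ⟨⟨x, x'⟩, ⟨y, y'⟩⟩ ⟨⟨u, u'⟩, ⟨v, v'⟩⟩
  simp only [Matrix.reindex_apply, Matrix.submatrix_apply, Equiv.prodProdProdComm_symm,
    Equiv.prodProdProdComm_apply, Matrix.add_apply, kroneckerMap_apply, Matrix.one_apply,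
    Prod.mk.injEq, ite_and, Prod.swap_prod_mk, ite_ite_mul]
  ring

end lifts

lemma exp_conjM (M : Matrix n n ℂ) :
    NormedSpace.exp (conjM M) = conjM (NormedSpace.exp M) := by
  have h : conjM M = (Mᴴ)ᵀ := by
    ext i j; simp [conjM, Matrix.conjTranspose_apply]
  have h2 : conjM (NormedSpace.exp M) = ((NormedSpace.exp M)ᴴ)ᵀ := by
    ext i j; simp [conjM, Matrix.conjTranspose_apply]
  rw [h, h2, Matrix.exp_transpose, Matrix.exp_conjTranspose]

lemma isUnit_of_unitary {U : Matrix n n ℂ} (hU : IsUnitary U) : IsUnit U := by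
  rw [Matrix.isUnit_iff_isUnit_det]
  have : U.det * Uᴴ.det = 1 := by rw [← Matrix.det_mul, hU.1, Matrix.det_one]
  exact IsUnit.of_mul_eq_one _ this

lemma exp_unitary_conj {U : Matrix n n ℂ} (hU : IsUnitary U) (A : Matrix n n ℂ) :
    NormedSpace.exp (U * A * Uᴴ) = U * NormedSpace.exp A * Uᴴ := by
  have hinv : U⁻¹ = Uᴴ := Matrix.inv_eq_right_inv hU.1
  rw [← hinv]
  exact Matrix.exp_conj U A (isUnit_of_unitary hU)

lemma conjM_traceB {α β : Type*} [Fintype β] (ρ : Matrix (α × β) (α × β) ℂ) :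
    traceB (conjM ρ) = conjM (traceB ρ) := by
  ext x u; simp [traceB, conjM, map_sum]

lemma conjM_traceA {α β : Type*} [Fintype α] (ρ : Matrix (α × β) (α × β) ℂ) :
    traceA (conjM ρ) = conjM (traceA ρ) := by
  ext x u; simp [traceA, conjM, map_sum]

lemma herm_exp_inj {X Y : Matrix n n ℂ}
    (hX : X.IsHermitian) (hY : Y.IsHermitian)
    (h : NormedSpace.exp X = NormedSpace.exp Y) : X = Y := by
  letI := Matrix.instL2OpNormedRing (𝕜 := ℂ) (n := n)
  letI := Matrix.instL2OpNormedAlgebra (𝕜 := ℂ) (n := n)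
  have hX' : IsSelfAdjoint X := hX
  have hY' : IsSelfAdjoint Y := hY
  have h' : NormedSpace.exp X = NormedSpace.exp Y := by
    exact h
  calc X = CFC.log (NormedSpace.exp X) := (CFC.log_exp X hX').symm
  _ = CFC.log (NormedSpace.exp Y) := by rw [h']
  _ = Y := CFC.log_exp Y hY'

section main
variable {a b : Type} [Fintype a] [Fintype b] [DecidableEq a] [DecidableEq b]

lemma C_conjT (KA : Matrix a a ℂ) (KB : Matrix b b ℂ) (KAB : Matrix (a × b) (a × b) ℂ)
    (hKA : KA.IsHermitian) (hKB : KB.IsHermitian) (hKAB : KAB.IsHermitian) :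
    (commM (commM KAB (commM KAB (KA ⊗ₖ (1 : Matrix b b ℂ))))
      ((1 : Matrix a a ℂ) ⊗ₖ KB))ᴴ
    = -(commM (commM KAB (commM KAB (KA ⊗ₖ (1 : Matrix b b ℂ))))
      ((1 : Matrix a a ℂ) ⊗ₖ KB)) := by
  have hA1 : (KA ⊗ₖ (1 : Matrix b b ℂ))ᴴ = KA ⊗ₖ (1 : Matrix b b ℂ) := by
    rw [kron_conjTranspose, hKA.eq, Matrix.conjTranspose_one]
  have h1B : ((1 : Matrix a a ℂ) ⊗ₖ KB)ᴴ = (1 : Matrix a a ℂ) ⊗ₖ KB := by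
    rw [kron_conjTranspose, hKB.eq, Matrix.conjTranspose_one]
  have hc1 := commM_conjT_HH hKAB.eq hA1
  have hc2 := commM_conjT_HA hKAB.eq hc1
  exact commM_conjT_HH hc2 h1B

lemma star_trace_mul {ρ C : Matrix a a ℂ} (hρ : ρᴴ = ρ) (hC : Cᴴ = -C) :
    star ((ρ * C).trace) = -((ρ * C).trace) := by
  rw [← Matrix.trace_conjTranspose, Matrix.conjTranspose_mul, hρ, hC, Matrix.neg_mul,
    Matrix.trace_neg, Matrix.trace_mul_comm]

lemma J3_real (ρ : Matrix (a × b) (a × b) ℂ) (KA : Matrix a a ℂ) (KB : Matrix b b ℂ)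
    (KAB : Matrix (a × b) (a × b) ℂ) (hρ : ρ.IsHermitian)
    (hKA : KA.IsHermitian) (hKB : KB.IsHermitian) (hKAB : KAB.IsHermitian) :
    (starRingEnd ℂ) (J3 ρ KA KB KAB) = J3 ρ KA KB KAB := by
  unfold J3
  rw [_root_.map_mul, Complex.conj_I]
  have := star_trace_mul (C := commM (commM KAB (commM KAB (KA ⊗ₖ (1 : Matrix b b ℂ))))
      ((1 : Matrix a a ℂ) ⊗ₖ KB)) hρ.eq (C_conjT KA KB KAB hKA hKB hKAB)
  rw [starRingEnd_apply, this]
  ring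

lemma mul_conjU {V A B : Matrix a a ℂ} (hVu : Vᴴ * V = 1) :
    (V * A * Vᴴ) * (V * B * Vᴴ) = V * (A * B) * Vᴴ := by
  calc (V * A * Vᴴ) * (V * B * Vᴴ) = V * A * (Vᴴ * V) * B * Vᴴ := by
        simp only [Matrix.mul_assoc]
  _ = V * (A * B) * Vᴴ := by rw [hVu]; simp only [Matrix.mul_one, Matrix.mul_assoc]

lemma trace_conjU {V A B : Matrix a a ℂ} (hVu : Vᴴ * V = 1) :
    ((V * A * Vᴴ) * (V * B * Vᴴ)).trace = (A * B).trace := by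
  rw [mul_conjU hVu, Matrix.trace_mul_comm, ← Matrix.mul_assoc, hVu, Matrix.one_mul]

lemma J3_unitary (ρ : Matrix (a × b) (a × b) ℂ) (KA : Matrix a a ℂ) (KB : Matrix b b ℂ)
    (KAB : Matrix (a × b) (a × b) ℂ) (UA : Matrix a a ℂ) (UB : Matrix b b ℂ)
    (hUA : IsUnitary UA) (hUB : IsUnitary UB) :
    J3 ((UA ⊗ₖ UB) * ρ * (UA ⊗ₖ UB)ᴴ) (UA * KA * UAᴴ) (UB * KB * UBᴴ)
        ((UA ⊗ₖ UB) * KAB * (UA ⊗ₖ UB)ᴴ) = J3 ρ KA KB KAB := by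
  set V := UA ⊗ₖ UB with hV
  have hVH : Vᴴ = UAᴴ ⊗ₖ UBᴴ := kron_conjTranspose UA UB
  have hVu : Vᴴ * V = 1 := by
    rw [hVH, hV, ← mul_kronecker_mul, hUA.2, hUB.2, one_kronecker_one]
  have hliftA : (UA * KA * UAᴴ) ⊗ₖ (1 : Matrix b b ℂ) = V * (KA ⊗ₖ (1 : Matrix b b ℂ)) * Vᴴ := by
    rw [hVH, hV, ← mul_kronecker_mul, ← mul_kronecker_mul, Matrix.mul_one, hUB.1]
  have hliftB : (1 : Matrix a a ℂ) ⊗ₖ (UB * KB * UBᴴ) = V * ((1 : Matrix a a ℂ) ⊗ₖ KB) * Vᴴ := by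
    rw [hVH, hV, ← mul_kronecker_mul, ← mul_kronecker_mul, Matrix.mul_one, hUA.1]
  unfold J3
  rw [hliftA, hliftB, commM_conjU hVu, commM_conjU hVu, commM_conjU hVu]
  congr 1
  exact trace_conjU hVu
end main

section main2
variable {a b a' b' : Type} [Fintype a] [Fintype b] [DecidableEq a] [DecidableEq b]
    [Fintype a'] [Fintype b'] [DecidableEq a'] [DecidableEq b']

lemma transpose_eq_conjM {M : Matrix a a ℂ} (h : Mᴴ = M) : Mᵀ = conjM M := by
  ext i j
  have h1 : star (M j i) = M i j := by
    have := congr_fun (congr_fun h i) j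
    simpa [Matrix.conjTranspose_apply] using this
  simp only [Matrix.transpose_apply, conjM, Matrix.map_apply]
  rw [← h1, starRingEnd_apply, star_star]

lemma conjM_commM (X Y : Matrix a a ℂ) :
    commM (conjM X) (conjM Y) = conjM (commM X Y) := by
  rw [commM, commM, conjM_sub, conjM_mul, conjM_mul]

lemma J3_conj (ρ : Matrix (a × b) (a × b) ℂ) (KA : Matrix a a ℂ) (KB : Matrix b b ℂ)
    (KAB : Matrix (a × b) (a × b) ℂ) (hρ : ρ.IsHermitian)
    (hKA : KA.IsHermitian) (hKB : KB.IsHermitian) (hKAB : KAB.IsHermitian) :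
    J3 (conjM ρ) KAᵀ KBᵀ KABᵀ = - J3 ρ KA KB KAB := by
  rw [transpose_eq_conjM hKA.eq, transpose_eq_conjM hKB.eq, transpose_eq_conjM hKAB.eq]
  unfold J3
  have hC : commM (commM (conjM KAB) (commM (conjM KAB) ((conjM KA) ⊗ₖ (1 : Matrix b b ℂ))))
      ((1 : Matrix a a ℂ) ⊗ₖ conjM KB)
      = conjM (commM (commM KAB (commM KAB (KA ⊗ₖ (1 : Matrix b b ℂ))))
          ((1 : Matrix a a ℂ) ⊗ₖ KB)) := by
    rw [← conjM_commM, ← conjM_commM, ← conjM_commM, conjM_kron, conjM_kron, conjM_one, conjM_one]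
  rw [hC, ← conjM_mul, trace_conjM, starRingEnd_apply,
    star_trace_mul hρ.eq (C_conjT KA KB KAB hKA hKB hKAB)]
  ring

lemma J3_add (ρ : Matrix (a × b) (a × b) ℂ) (KA : Matrix a a ℂ) (KB : Matrix b b ℂ)
    (KAB : Matrix (a × b) (a × b) ℂ)
    (σ : Matrix (a' × b') (a' × b') ℂ) (LA : Matrix a' a' ℂ) (LB : Matrix b' b' ℂ)
    (LAB : Matrix (a' × b') (a' × b') ℂ)
    (htrρ : ρ.trace = 1) (htrσ : σ.trace = 1) :
    J3 (Matrix.reindex (Equiv.prodProdProdComm a b a' b') (Equiv.prodProdProdComm a b a' b')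
          (ρ ⊗ₖ σ))
        (KA ⊗ₖ (1 : Matrix a' a' ℂ) + (1 : Matrix a a ℂ) ⊗ₖ LA)
        (KB ⊗ₖ (1 : Matrix b' b' ℂ) + (1 : Matrix b b ℂ) ⊗ₖ LB)
        (Matrix.reindex (Equiv.prodProdProdComm a b a' b') (Equiv.prodProdProdComm a b a' b')
          (KAB ⊗ₖ (1 : Matrix (a' × b') (a' × b') ℂ)
            + (1 : Matrix (a × b) (a × b) ℂ) ⊗ₖ LAB))
      = J3 ρ KA KB KAB + J3 σ LA LB LAB := by
  unfold J3
  rw [liftA_reindex, liftB_reindex, ← reindex_commM, ← reindex_commM, ← reindex_commM,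
    ← reindex_mul, trace_reindex, comm_lift, comm_lift, comm_lift, Matrix.mul_add,
    Matrix.trace_add, ← mul_kronecker_mul, ← mul_kronecker_mul]
  simp only [Matrix.mul_one, Matrix.one_mul]
  rw [trace_kronecker, trace_kronecker, htrρ, htrσ]
  ring

end main2

end helpers

/-- `J₃` is real, invariant under local unitaries, additive under tensor
products (with the bipartition `AA'|BB'`), odd under complex conjugation, and hence
vanishes on bipartite non-chiral states. -/
theorem stmt_8 {a b a' b' : Type}
    [Fintype a] [Fintype b] [DecidableEq a] [DecidableEq b]
    [Fintype a'] [Fintype b'] [DecidableEq a'] [DecidableEq b']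
    (ρ : Matrix (a × b) (a × b) ℂ) (KA : Matrix a a ℂ) (KB : Matrix b b ℂ)
    (KAB : Matrix (a × b) (a × b) ℂ)
    (σ : Matrix (a' × b') (a' × b') ℂ) (LA : Matrix a' a' ℂ) (LB : Matrix b' b' ℂ)
    (LAB : Matrix (a' × b') (a' × b') ℂ)
    (hρ : ρ.PosDef) (htrρ : ρ.trace = 1)
    (hσ : σ.PosDef) (htrσ : σ.trace = 1)
    (hKA : KA.IsHermitian) (hKB : KB.IsHermitian) (hKAB : KAB.IsHermitian)
    (hLA : LA.IsHermitian) (hLB : LB.IsHermitian) (hLAB : LAB.IsHermitian)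
    (heA : NormedSpace.exp (-KA) = traceB ρ)
    (heB : NormedSpace.exp (-KB) = traceA ρ)
    (heAB : NormedSpace.exp (-KAB) = ρ)
    (heA' : NormedSpace.exp (-LA) = traceB σ)
    (heB' : NormedSpace.exp (-LB) = traceA σ)
    (heAB' : NormedSpace.exp (-LAB) = σ) :
    -- (1) reality
    (starRingEnd ℂ) (J3 ρ KA KB KAB) = J3 ρ KA KB KAB ∧
    -- (2) local-unitary invariance
    (∀ (UA : Matrix a a ℂ) (UB : Matrix b b ℂ), IsUnitary UA → IsUnitary UB →
      J3 ((UA ⊗ₖ UB) * ρ * (UA ⊗ₖ UB)ᴴ) (UA * KA * UAᴴ) (UB * KB * UBᴴ)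
        ((UA ⊗ₖ UB) * KAB * (UA ⊗ₖ UB)ᴴ) = J3 ρ KA KB KAB) ∧
    -- (3) additivity under tensor products, with bipartition AA'|BB'
    (J3 (Matrix.reindex (Equiv.prodProdProdComm a b a' b') (Equiv.prodProdProdComm a b a' b')
          (ρ ⊗ₖ σ))
        (KA ⊗ₖ (1 : Matrix a' a' ℂ) + (1 : Matrix a a ℂ) ⊗ₖ LA)
        (KB ⊗ₖ (1 : Matrix b' b' ℂ) + (1 : Matrix b b ℂ) ⊗ₖ LB)
        (Matrix.reindex (Equiv.prodProdProdComm a b a' b') (Equiv.prodProdProdComm a b a' b')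
          (KAB ⊗ₖ (1 : Matrix (a' × b') (a' × b') ℂ)
            + (1 : Matrix (a × b) (a × b) ℂ) ⊗ₖ LAB))
      = J3 ρ KA KB KAB + J3 σ LA LB LAB) ∧
    -- (4) oddness under complex conjugation
    (J3 (conjM ρ) KAᵀ KBᵀ KABᵀ = - J3 ρ KA KB KAB) ∧
    -- (5) vanishing on non-chiral states
    ((∃ (UA : Matrix a a ℂ) (UB : Matrix b b ℂ), IsUnitary UA ∧ IsUnitary UB ∧
        (UA ⊗ₖ UB) * ρ * (UA ⊗ₖ UB)ᴴ = conjM ρ) →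
      J3 ρ KA KB KAB = 0) := by
  refine ⟨J3_real ρ KA KB KAB hρ.1 hKA hKB hKAB,
    fun UA UB hUA hUB => J3_unitary ρ KA KB KAB UA UB hUA hUB,
    J3_add ρ KA KB KAB σ LA LB LAB htrρ htrσ,
    J3_conj ρ KA KB KAB hρ.1 hKA hKB hKAB, ?_⟩
  rintro ⟨UA, UB, hUA, hUB, hconj⟩
  -- decompose the local unitary
  set V := UA ⊗ₖ UB with hVdef
  have hVH : Vᴴ = UAᴴ ⊗ₖ UBᴴ := kron_conjTranspose UA UB
  have hVunit : IsUnitary V := by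
    constructor
    · rw [hVH, hVdef, ← mul_kronecker_mul, hUA.1, hUB.1, one_kronecker_one]
    · rw [hVH, hVdef, ← mul_kronecker_mul, hUA.2, hUB.2, one_kronecker_one]
  -- traceB of the conjugated state
  have hdecomp : V * ρ * Vᴴ
      = (UA ⊗ₖ (1 : Matrix b b ℂ)) *
        ((((1 : Matrix a a ℂ) ⊗ₖ UB) * ρ) * ((1 : Matrix a a ℂ) ⊗ₖ UBᴴ)) *
        (UAᴴ ⊗ₖ (1 : Matrix b b ℂ)) := by
    rw [hVH, hVdef, show UA ⊗ₖ UB = (UA ⊗ₖ (1 : Matrix b b ℂ)) * ((1 : Matrix a a ℂ) ⊗ₖ UB) by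
        rw [← mul_kronecker_mul, Matrix.mul_one, Matrix.one_mul],
      show UAᴴ ⊗ₖ UBᴴ = ((1 : Matrix a a ℂ) ⊗ₖ UBᴴ) * (UAᴴ ⊗ₖ (1 : Matrix b b ℂ)) by
        rw [← mul_kronecker_mul, Matrix.mul_one, Matrix.one_mul]]
    simp only [Matrix.mul_assoc]
  have htraceB : traceB (V * ρ * Vᴴ) = UA * traceB ρ * UAᴴ := by
    rw [hdecomp, Matrix.mul_assoc, traceB_lmul, traceB_rmul, Matrix.mul_assoc, traceB_cyc,
      Matrix.mul_assoc, ← mul_kronecker_mul, Matrix.one_mul, hUB.2, one_kronecker_one,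
      Matrix.mul_one]
    simp only [Matrix.mul_assoc]
  have hdecompA : V * ρ * Vᴴ
      = (((1 : Matrix a a ℂ) ⊗ₖ UB)) *
        (((UA ⊗ₖ (1 : Matrix b b ℂ)) * ρ) * (UAᴴ ⊗ₖ (1 : Matrix b b ℂ))) *
        ((1 : Matrix a a ℂ) ⊗ₖ UBᴴ) := by
    rw [hVH, hVdef, show UA ⊗ₖ UB = ((1 : Matrix a a ℂ) ⊗ₖ UB) * (UA ⊗ₖ (1 : Matrix b b ℂ)) by
        rw [← mul_kronecker_mul, Matrix.mul_one, Matrix.one_mul],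
      show UAᴴ ⊗ₖ UBᴴ = (UAᴴ ⊗ₖ (1 : Matrix b b ℂ)) * ((1 : Matrix a a ℂ) ⊗ₖ UBᴴ) by
        rw [← mul_kronecker_mul, Matrix.mul_one, Matrix.one_mul]]
    simp only [Matrix.mul_assoc]
  have htraceA : traceA (V * ρ * Vᴴ) = UB * traceA ρ * UBᴴ := by
    rw [hdecompA, Matrix.mul_assoc, traceA_rmul', traceA_lmul', Matrix.mul_assoc, traceA_cyc',
      Matrix.mul_assoc, ← mul_kronecker_mul, Matrix.one_mul, hUA.2, one_kronecker_one,
      Matrix.mul_one]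
    simp only [Matrix.mul_assoc]
  -- identify the conjugated modular Hamiltonians
  have hnegA : -(UA * KA * UAᴴ) = UA * (-KA) * UAᴴ := by
    simp [Matrix.neg_mul, Matrix.mul_neg]
  have hnegB : -(UB * KB * UBᴴ) = UB * (-KB) * UBᴴ := by
    simp [Matrix.neg_mul, Matrix.mul_neg]
  have hnegAB : -(V * KAB * Vᴴ) = V * (-KAB) * Vᴴ := by
    simp [Matrix.neg_mul, Matrix.mul_neg]
  have hermA : (UA * KA * UAᴴ).IsHermitian := by
    simp only [Matrix.IsHermitian, Matrix.conjTranspose_mul, Matrix.conjTranspose_conjTranspose,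
      hKA.eq, Matrix.mul_assoc]
  have hermB : (UB * KB * UBᴴ).IsHermitian := by
    simp only [Matrix.IsHermitian, Matrix.conjTranspose_mul, Matrix.conjTranspose_conjTranspose,
      hKB.eq, Matrix.mul_assoc]
  have hermAB : (V * KAB * Vᴴ).IsHermitian := by
    simp only [Matrix.IsHermitian, Matrix.conjTranspose_mul, Matrix.conjTranspose_conjTranspose,
      hKAB.eq, Matrix.mul_assoc]
  have hconjA : -(KAᵀ) = conjM (-KA) := by
    rw [← Matrix.transpose_neg, transpose_eq_conjM (by rw [Matrix.conjTranspose_neg, hKA.eq])]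
  have hconjB : -(KBᵀ) = conjM (-KB) := by
    rw [← Matrix.transpose_neg, transpose_eq_conjM (by rw [Matrix.conjTranspose_neg, hKB.eq])]
  have hconjAB : -(KABᵀ) = conjM (-KAB) := by
    rw [← Matrix.transpose_neg, transpose_eq_conjM (by rw [Matrix.conjTranspose_neg, hKAB.eq])]
  have hUA_KA : UA * KA * UAᴴ = KAᵀ := by
    have h1 : NormedSpace.exp (-(UA * KA * UAᴴ)) = NormedSpace.exp (-(KAᵀ)) := by
      rw [hnegA, exp_unitary_conj hUA, heA, hconjA, exp_conjM, heA, ← conjM_traceB, ← hconj,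
        htraceB]
    have := herm_exp_inj hermA.neg hKA.transpose.neg h1
    exact neg_inj.mp this
  have hUB_KB : UB * KB * UBᴴ = KBᵀ := by
    have h1 : NormedSpace.exp (-(UB * KB * UBᴴ)) = NormedSpace.exp (-(KBᵀ)) := by
      rw [hnegB, exp_unitary_conj hUB, heB, hconjB, exp_conjM, heB, ← conjM_traceA, ← hconj,
        htraceA]
    have := herm_exp_inj hermB.neg hKB.transpose.neg h1
    exact neg_inj.mp this
  have hV_KAB : V * KAB * Vᴴ = KABᵀ := by
    have h1 : NormedSpace.exp (-(V * KAB * Vᴴ)) = NormedSpace.exp (-(KABᵀ)) := by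
      rw [hnegAB, exp_unitary_conj hVunit, heAB, hconjAB, exp_conjM, heAB, ← hconj]
    have := herm_exp_inj hermAB.neg hKAB.transpose.neg h1
    exact neg_inj.mp this
  have h2 := J3_unitary ρ KA KB KAB UA UB hUA hUB
  rw [show (UA ⊗ₖ UB) * ρ * (UA ⊗ₖ UB)ᴴ = conjM ρ from hconj, hUA_KA, hUB_KB,
    show (UA ⊗ₖ UB) * KAB * (UA ⊗ₖ UB)ᴴ = KABᵀ from hV_KAB,
    J3_conj ρ KA KB KAB hρ.1 hKA hKB hKAB] at h2
  have h3 : J3 ρ KA KB KAB + J3 ρ KA KB KAB = 0 := by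
    nth_rewrite 1 [← neg_neg (J3 ρ KA KB KAB)]
    rw [h2]
    ring
  exact add_self_eq_zero.mp h3
end
end

section
/- For any n-qubit pure state ψ, the Pauli chiral distance C_P(ψ) = −log max_{P ∈ Pauli group} |⟨ψ*|P|ψ⟩|² is at most the stabilizer nullity ν(ψ). -/
open Matrix Kronecker BigOperators
open scoped ComplexOrder

noncomputable section

/-- The four single-qubit Pauli matrices `I, X, Y, Z`. -/
def pauli : Fin 4 → Matrix (Fin 2) (Fin 2) ℂ :=
  ![1, !![0, 1; 1, 0], !![0, -Complex.I; Complex.I, 0], !![1, 0; 0, -1]]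

/-- A (phase-free) Pauli string `Q₁ ⊗ ⋯ ⊗ Qₙ` on `n` qubits. -/
def PauliString (n : ℕ) (f : Fin n → Fin 4) :
    Matrix (Fin n → Fin 2) (Fin n → Fin 2) ℂ :=
  fun i j => ∏ x, pauli (f x) (i x) (j x)

/-! ### Auxiliary material for the proof -/

/-- Identification of the Pauli labels with `(ZMod 2)²`. -/
def e4 : Fin 4 → ZMod 2 × ZMod 2 := ![(0,0),(1,0),(1,1),(0,1)]

lemma e4_inj : Function.Injective e4 := by decide

/-- The symplectic (commutation) exponent between two Pauli labels, as a natural number. -/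
def spN (p q : Fin 4) : ℕ := (((e4 p).1 * (e4 q).2 + (e4 p).2 * (e4 q).1) : ZMod 2).val

lemma spN_comm : ∀ p q : Fin 4, spN p q = spN q p := by decide

/-- The transpose sign exponent of a Pauli label (1 exactly for `Y`). -/
def yN : Fin 4 → ℕ := ![0, 0, 1, 0]

lemma pauli_complete (a b c d : Fin 2) :
    ∑ p : Fin 4, pauli p a b * star (pauli p c d) = if a = c ∧ b = d then 2 else 0 := by
  fin_cases a <;> fin_cases b <;> fin_cases c <;> fin_cases d <;>
    simp [pauli, Fin.sum_univ_four, Matrix.one_fin_two] <;> norm_num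

lemma pauli_star (p : Fin 4) (a b : Fin 2) : star (pauli p a b) = pauli p b a := by
  fin_cases p <;> fin_cases a <;> fin_cases b <;> simp [pauli, Matrix.one_fin_two]

lemma pauli_transpose (p : Fin 4) (a b : Fin 2) :
    pauli p b a = (-1 : ℂ) ^ (yN p) * pauli p a b := by
  fin_cases p <;> fin_cases a <;> fin_cases b <;> simp [pauli, yN, Matrix.one_fin_two]

lemma pauli_mul_self (p : Fin 4) : pauli p * pauli p = 1 := by
  fin_cases p <;> ext a b <;> fin_cases a <;> fin_cases b <;>
    simp [pauli, Matrix.mul_apply, Fin.sum_univ_two, Matrix.one_fin_two] <;>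
    ring_nf <;> simp [Complex.I_sq]

lemma pauli_comm (p q : Fin 4) :
    pauli p * pauli q = ((-1 : ℂ) ^ (spN p q)) • (pauli q * pauli p) := by
  fin_cases p <;> fin_cases q <;> ext a b <;> fin_cases a <;> fin_cases b <;>
    simp [pauli, spN, e4, Matrix.mul_apply, Fin.sum_univ_two, Matrix.one_fin_two,
      ZMod.val_one, show ZMod.val (2 : ZMod 2) = 0 from rfl,
      show ZMod.val (1 + 1 : ZMod 2) = 0 from rfl]

section Strings

variable {n : ℕ}

lemma PS_mul_apply (f g : Fin n → Fin 4) (x y : Fin n → Fin 2) :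
    (PauliString n f * PauliString n g) x y = ∏ i, (pauli (f i) * pauli (g i)) (x i) (y i) := by
  simp only [Matrix.mul_apply, PauliString]
  rw [Finset.prod_univ_sum]
  rw [Fintype.piFinset_univ]
  exact Finset.sum_congr rfl fun j _ => (Finset.prod_mul_distrib).symm

lemma PS_mul_self (f : Fin n → Fin 4) : PauliString n f * PauliString n f = 1 := by
  ext x y
  rw [PS_mul_apply]
  simp only [pauli_mul_self, Matrix.one_apply]
  simp [Finset.prod_boole, funext_iff]

lemma PS_comm (f g : Fin n → Fin 4) :
    PauliString n f * PauliString n g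
      = ((-1 : ℂ) ^ (∑ i, spN (f i) (g i))) • (PauliString n g * PauliString n f) := by
  ext x y
  rw [PS_mul_apply, Matrix.smul_apply, PS_mul_apply, smul_eq_mul, ← Finset.prod_pow_eq_pow_sum,
    ← Finset.prod_mul_distrib]
  exact Finset.prod_congr rfl fun i _ => by rw [pauli_comm (f i) (g i)]; rfl

lemma PS_star_apply (f : Fin n → Fin 4) (x y : Fin n → Fin 2) :
    star (PauliString n f x y) = PauliString n f y x := by
  simp only [PauliString, star_prod, pauli_star]

lemma PS_conjTranspose (f : Fin n → Fin 4) :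
    (PauliString n f)ᴴ = PauliString n f := by
  ext x y; rw [Matrix.conjTranspose_apply, PS_star_apply]

lemma PS_transpose (f : Fin n → Fin 4) :
    (PauliString n f)ᵀ = ((-1 : ℂ) ^ (∑ i, yN (f i))) • PauliString n f := by
  ext x y
  rw [Matrix.transpose_apply, Matrix.smul_apply, smul_eq_mul]
  simp only [PauliString, ← Finset.prod_pow_eq_pow_sum, ← Finset.prod_mul_distrib]
  exact Finset.prod_congr rfl fun i _ => pauli_transpose (f i) (x i) (y i)

/-- Completeness of the Pauli strings. -/
lemma sum_PS_mul_star (x y x' y' : Fin n → Fin 2) :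
    ∑ f : Fin n → Fin 4, PauliString n f x y * star (PauliString n f x' y')
      = if x = x' ∧ y = y' then (2:ℂ)^n else 0 := by
  have h1 : ∀ f : Fin n → Fin 4, PauliString n f x y * star (PauliString n f x' y')
      = ∏ i, (pauli (f i) (x i) (y i) * star (pauli (f i) (x' i) (y' i))) := by
    intro f
    simp only [PauliString, star_prod, Finset.prod_mul_distrib]
  simp only [h1]
  rw [← Fintype.piFinset_univ, ← Finset.prod_univ_sum (fun _ => Finset.univ)
    (fun i c => pauli c (x i) (y i) * star (pauli c (x' i) (y' i)))]
  simp only [pauli_complete]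
  by_cases h : x = x' ∧ y = y'
  · rw [if_pos h]
    rw [Finset.prod_congr rfl (fun i _ => if_pos ⟨congrFun h.1 i, congrFun h.2 i⟩)]
    simp
  · rw [if_neg h]
    have : ∃ i, ¬(x i = x' i ∧ y i = y' i) := by
      by_contra hc
      push_neg at hc
      exact h ⟨funext fun i => (hc i).1, funext fun i => (hc i).2⟩
    obtain ⟨i, hi⟩ := this
    exact Finset.prod_eq_zero (Finset.mem_univ i) (if_neg hi)

variable (ψ : (Fin n → Fin 2) → ℂ)

/-- The chiral amplitude `⟨ψ*|P|ψ⟩`. -/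
def amp (f : Fin n → Fin 4) : ℂ := dotProduct ψ ((PauliString n f).mulVec ψ)

lemma amp_eq (f : Fin n → Fin 4) :
    amp ψ f = ∑ p : (Fin n → Fin 2) × (Fin n → Fin 2),
      ψ p.1 * (PauliString n f p.1 p.2 * ψ p.2) := by
  rw [amp, dotProduct, Fintype.sum_prod_type]
  exact Finset.sum_congr rfl fun x _ => by
    rw [Matrix.mulVec, dotProduct, Finset.mul_sum]

/-- Parseval-type identity: `∑_P |⟨ψ*|P|ψ⟩|² = 2^n` for a normalized state. -/
lemma parseval (hψ1 : ∑ x, ψ x * star (ψ x) = 1) :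
    ∑ f : Fin n → Fin 4, amp ψ f * star (amp ψ f) = (2:ℂ)^n := by
  classical
  have expand : ∀ f, amp ψ f * star (amp ψ f)
      = ∑ p : (Fin n → Fin 2) × (Fin n → Fin 2), ∑ q : (Fin n → Fin 2) × (Fin n → Fin 2),
          (ψ p.1 * ψ p.2 * star (ψ q.1) * star (ψ q.2))
            * (PauliString n f p.1 p.2 * star (PauliString n f q.1 q.2)) := by
    intro f
    rw [amp_eq, star_sum, Finset.sum_mul_sum]
    refine Finset.sum_congr rfl fun p _ => Finset.sum_congr rfl fun q _ => ?_
    simp only [star_mul']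
    ring
  simp only [expand]
  rw [Finset.sum_comm]
  rw [Finset.sum_congr rfl fun (p : (Fin n → Fin 2) × (Fin n → Fin 2)) _ => Finset.sum_comm]
  have inner : ∀ p q : (Fin n → Fin 2) × (Fin n → Fin 2),
      ∑ f : Fin n → Fin 4, (ψ p.1 * ψ p.2 * star (ψ q.1) * star (ψ q.2))
          * (PauliString n f p.1 p.2 * star (PauliString n f q.1 q.2))
        = (ψ p.1 * ψ p.2 * star (ψ q.1) * star (ψ q.2))
            * (if q = p then (2:ℂ)^n else 0) := by
    intro p q
    rw [← Finset.mul_sum, sum_PS_mul_star]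
    congr 1
    have : (p.1 = q.1 ∧ p.2 = q.2) ↔ q = p := by
      constructor
      · rintro ⟨h1, h2⟩; exact Prod.ext h1.symm h2.symm
      · rintro rfl; exact ⟨rfl, rfl⟩
    simp only [this]
  rw [Finset.sum_congr rfl fun p _ => Finset.sum_congr rfl fun q _ => inner p q]
  simp only [mul_ite, mul_zero]
  rw [Finset.sum_congr rfl fun (p : (Fin n → Fin 2) × (Fin n → Fin 2)) _ =>
    Finset.sum_ite_eq' Finset.univ p _]
  simp only [Finset.mem_univ, if_true]
  rw [Fintype.sum_prod_type]
  have hterm : ∀ x y : Fin n → Fin 2,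
      ψ x * ψ y * star (ψ x) * star (ψ y) * (2:ℂ)^n
        = ((2:ℂ)^n * (ψ x * star (ψ x))) * (ψ y * star (ψ y)) := by
    intro x y; ring
  simp only [hterm]
  have hx : ∀ x : Fin n → Fin 2,
      ∑ y, ((2:ℂ)^n * (ψ x * star (ψ x))) * (ψ y * star (ψ y))
        = (2:ℂ)^n * (ψ x * star (ψ x)) := by
    intro x
    rw [← Finset.mul_sum, hψ1, mul_one]
  rw [Finset.sum_congr rfl fun x _ => hx x]
  rw [← Finset.mul_sum, hψ1, mul_one]

/-- A stabilizer is an honest `±1` eigenvector relation. -/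
lemma eig (hψ1 : dotProduct (star ψ) ψ = 1) (f : Fin n → Fin 4) (ε : ℂ)
    (hε : ε = 1 ∨ ε = -1)
    (h : dotProduct (star ψ) ((PauliString n f).mulVec ψ) = ε) :
    (PauliString n f).mulVec ψ = ε • ψ := by
  have hε2 : ε * ε = 1 := by rcases hε with rfl | rfl <;> ring
  have hεstar : star ε = ε := by rcases hε with rfl | rfl <;> simp
  set v := (PauliString n f).mulVec ψ with hv
  have hvv : dotProduct (star v) v = 1 := by
    rw [hv, Matrix.star_mulVec, ← Matrix.dotProduct_mulVec, Matrix.mulVec_mulVec,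
      PS_conjTranspose, PS_mul_self, Matrix.one_mulVec, hψ1]
  have hswap : dotProduct (star v) ψ = star (dotProduct (star ψ) v) := by
    simp only [dotProduct, star_sum, star_mul', star_star, Pi.star_apply]
    exact Finset.sum_congr rfl fun x _ => by ring
  have hvψ : dotProduct (star v) ψ = ε := by rw [hswap, h, hεstar]
  have h0 : dotProduct (star (v - ε • ψ)) (v - ε • ψ) = 0 := by
    simp only [star_sub, star_smul, sub_dotProduct, dotProduct_sub,
      smul_dotProduct, dotProduct_smul, smul_eq_mul, hεstar]
    rw [hvv, hvψ, h, hψ1]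
    rcases hε with rfl | rfl <;> norm_num
  have := dotProduct_star_self_eq_zero.mp h0
  rw [sub_eq_zero] at this
  exact this

/-- Key sign constraint: a nonzero chiral amplitude forces the symplectic pairing with any
stabilizer to match its `Y`-count parity. -/
lemma constraint (f q : Fin n → Fin 4) (ε : ℂ) (hε : ε = 1 ∨ ε = -1)
    (hq : (PauliString n q).mulVec ψ = ε • ψ)
    (hne : amp ψ f ≠ 0) :
    Even (∑ i, spN (f i) (q i) + ∑ i, yN (q i)) := by
  have hε2 : ε * ε = 1 := by rcases hε with rfl | rfl <;> ring
  have hψeq : ψ = ε • ((PauliString n q).mulVec ψ) := by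
    rw [hq, smul_smul, hε2, one_smul]
  set cY : ℂ := (-1 : ℂ) ^ (∑ i, yN (q i)) with hcY
  set cB : ℂ := (-1 : ℂ) ^ (∑ i, spN (f i) (q i)) with hcB
  have key : amp ψ f = (cY * cB) * amp ψ f := by
    conv_lhs => rw [amp, hψeq]
    rw [Matrix.mulVec_smul, smul_dotProduct, dotProduct_smul, smul_smul,
      smul_eq_mul, hε2, one_mul]
    have hswap : ∀ w, dotProduct ((PauliString n q).mulVec ψ) w
        = dotProduct ψ ((PauliString n q)ᵀ.mulVec w) := by
      intro w
      rw [dotProduct_comm, Matrix.dotProduct_mulVec, ← Matrix.mulVec_transpose,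
        dotProduct_comm]
    rw [Matrix.mulVec_mulVec, hswap, Matrix.mulVec_mulVec]
    have hmat : (PauliString n q)ᵀ * (PauliString n f * PauliString n q)
        = (cY * cB) • PauliString n f := by
      rw [PS_transpose, Matrix.smul_mul, ← mul_assoc]
      have : PauliString n q * PauliString n f
          = cB • (PauliString n f * PauliString n q) := by
        rw [PS_comm, hcB]
        congr 2
        exact Finset.sum_congr rfl fun i _ => spN_comm (q i) (f i)
      rw [this, Matrix.smul_mul, mul_assoc, PS_mul_self, mul_one, smul_smul, hcY, hcB]
    rw [hmat, Matrix.smul_mulVec, dotProduct_smul, smul_eq_mul, amp]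
  have hc1 : cY * cB = 1 := by
    by_contra hc
    apply hne
    have : (1 - cY * cB) * amp ψ f = 0 := by linear_combination key
    rcases mul_eq_zero.mp this with h1 | h1
    · exact absurd (by linear_combination -h1) hc
    · exact h1
  have : cB * cY = 1 := by rw [mul_comm]; exact hc1
  rw [hcB, hcY, ← pow_add] at this
  have hne1 : (-1 : ℂ) ≠ 1 := by norm_num
  exact (neg_one_pow_eq_one_iff_even hne1).mp this

end Strings

/-! ### The `ZMod 2` symplectic counting argument -/

section Counting

variable {n : ℕ}

def iota (f : Fin n → Fin 4) : Fin n → ZMod 2 × ZMod 2 := fun i => e4 (f i)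

lemma iota_inj : Function.Injective (iota (n := n)) := fun f g h =>
  funext fun i => e4_inj (congrFun h i)

def Bf (n : ℕ) : LinearMap.BilinForm (ZMod 2) (Fin n → ZMod 2 × ZMod 2) :=
  LinearMap.mk₂ (ZMod 2) (fun v w => ∑ i, ((v i).1 * (w i).2 + (v i).2 * (w i).1))
    (by intro v v' w; rw [← Finset.sum_add_distrib]; exact Finset.sum_congr rfl fun i _ => by
          simp [Prod.fst_add, Prod.snd_add]; ring)
    (by intro c v w; rw [Finset.smul_sum]; exact Finset.sum_congr rfl fun i _ => by
          simp [Prod.smul_fst, Prod.smul_snd, smul_eq_mul]; ring)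
    (by intro v w w'; rw [← Finset.sum_add_distrib]; exact Finset.sum_congr rfl fun i _ => by
          simp [Prod.fst_add, Prod.snd_add]; ring)
    (by intro c v w; rw [Finset.smul_sum]; exact Finset.sum_congr rfl fun i _ => by
          simp [Prod.smul_fst, Prod.smul_snd, smul_eq_mul]; ring)

lemma Bf_apply (v w : Fin n → ZMod 2 × ZMod 2) :
    Bf n v w = ∑ i, ((v i).1 * (w i).2 + (v i).2 * (w i).1) := rfl

lemma Bf_symm (v w : Fin n → ZMod 2 × ZMod 2) : Bf n v w = Bf n w v := by
  rw [Bf_apply, Bf_apply]; exact Finset.sum_congr rfl fun i _ => by ring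

lemma Bf_refl : (Bf n).IsRefl := fun v w h => by rwa [Bf_symm]

lemma Bf_nondeg : (Bf n).Nondegenerate := by
  refine (LinearMap.IsRefl.nondegenerate_iff_separatingLeft Bf_refl).mpr ?_
  intro v h
  funext i
  have h1 := h (Pi.single i ((0 : ZMod 2), (1 : ZMod 2)))
  have h2 := h (Pi.single i ((1 : ZMod 2), (0 : ZMod 2)))
  rw [Bf_apply] at h1 h2
  rw [Finset.sum_eq_single i (fun b _ hb => by simp [Pi.single_eq_of_ne hb]) (by simp)] at h1
  rw [Finset.sum_eq_single i (fun b _ hb => by simp [Pi.single_eq_of_ne hb]) (by simp)] at h2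
  simp only [Pi.single_eq_same] at h1 h2
  have e1 : (v i).1 = 0 := by simpa using h1
  have e2 : (v i).2 = 0 := by simpa using h2
  ext <;> simp [e1, e2]

lemma counting (k : ℕ) (S : Set (Fin n → Fin 4)) (hS : S.ncard = 2 ^ k)
    (φ : (Fin n → Fin 4) → ZMod 2) :
    {f : Fin n → Fin 4 | ∀ q ∈ S, Bf n (iota f) (iota q) = φ q}.ncard * 2 ^ k ≤ 4 ^ n := by
  classical
  set C : Set (Fin n → Fin 4) := {f | ∀ q ∈ S, Bf n (iota f) (iota q) = φ q} with hC
  rcases C.eq_empty_or_nonempty with h | ⟨f₀, hf₀⟩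
  · simp [h]
  set W : Submodule (ZMod 2) (Fin n → ZMod 2 × ZMod 2) :=
    Submodule.span (ZMod 2) (iota '' S) with hW
  set orth := (Bf n).orthogonal W with horth
  have hsub : (fun f => iota f - iota f₀) '' C ⊆ (orth : Set _) := by
    rintro _ ⟨f, hf, rfl⟩
    rw [horth]
    intro w hw
    show (Bf n) w (iota f - iota f₀) = 0
    rw [Bf_symm]
    have hker : W ≤ LinearMap.ker ((Bf n) (iota f - iota f₀)) := by
      rw [hW, Submodule.span_le]
      rintro _ ⟨q, hq, rfl⟩
      simp only [SetLike.mem_coe, LinearMap.mem_ker, map_sub, LinearMap.sub_apply]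
      rw [hf q hq, hf₀ q hq, sub_self]
    exact hker hw
  have hCcard : C.ncard ≤ Nat.card orth := by
    have h1 : C.ncard = ((fun f => iota f - iota f₀) '' C).ncard := by
      rw [Set.ncard_image_of_injective]
      intro a b hab
      exact iota_inj (by simpa [sub_left_inj] using hab)
    rw [h1]
    have h2 := Set.ncard_le_ncard hsub (Set.toFinite _)
    have h3 : (SetLike.coe orth).ncard = Nat.card orth := by
      rw [← Nat.card_coe_set_eq]; rfl
    omega
  haveI : Module.Finite (ZMod 2) (Fin n → ZMod 2 × ZMod 2) := by infer_instance
  have horthcard : Nat.card orth = 2 ^ (Module.finrank (ZMod 2) orth) := by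
    rw [Nat.card_eq_fintype_card, Module.card_eq_pow_finrank (K := ZMod 2)]
    simp [ZMod.card]
  have hWcard : Nat.card W = 2 ^ (Module.finrank (ZMod 2) W) := by
    rw [Nat.card_eq_fintype_card, Module.card_eq_pow_finrank (K := ZMod 2)]
    simp [ZMod.card]
  have hVcard : (Fintype.card (Fin n → ZMod 2 × ZMod 2))
      = 2 ^ (Module.finrank (ZMod 2) (Fin n → ZMod 2 × ZMod 2)) := by
    rw [Module.card_eq_pow_finrank (K := ZMod 2)]; simp [ZMod.card]
  have hV4 : Fintype.card (Fin n → ZMod 2 × ZMod 2) = 4 ^ n := by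
    simp [Fintype.card_fun, ZMod.card]
  have hkW : k ≤ Module.finrank (ZMod 2) W := by
    have h2 : (2:ℕ) ^ k ≤ Nat.card W := by
      rw [← hS]
      have h5 : (iota '' S).ncard = S.ncard := Set.ncard_image_of_injective _ iota_inj
      rw [← h5]
      have hsub2 : iota '' S ⊆ (W : Set _) := Submodule.subset_span
      have h4 := Set.ncard_le_ncard hsub2 (Set.toFinite _)
      have h3 : (SetLike.coe W).ncard = Nat.card W := by
        rw [← Nat.card_coe_set_eq]; rfl
      omega
    rw [hWcard] at h2
    exact (pow_le_pow_iff_right₀ (by norm_num)).mp h2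
  have hrank : Module.finrank (ZMod 2) orth
      = Module.finrank (ZMod 2) (Fin n → ZMod 2 × ZMod 2) - Module.finrank (ZMod 2) W :=
    LinearMap.BilinForm.finrank_orthogonal Bf_nondeg W
  have hWle : Module.finrank (ZMod 2) W ≤ Module.finrank (ZMod 2) (Fin n → ZMod 2 × ZMod 2) :=
    Submodule.finrank_le W
  calc C.ncard * 2 ^ k ≤ Nat.card orth * 2 ^ k := Nat.mul_le_mul_right _ hCcard
    _ = 2 ^ (Module.finrank (ZMod 2) orth) * 2 ^ k := by rw [horthcard]
    _ ≤ 2 ^ (Module.finrank (ZMod 2) (Fin n → ZMod 2 × ZMod 2)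
          - Module.finrank (ZMod 2) W) * 2 ^ (Module.finrank (ZMod 2) W) := by
        rw [hrank]; exact Nat.mul_le_mul_left _ (Nat.pow_le_pow_right (by norm_num) hkW)
    _ = 2 ^ (Module.finrank (ZMod 2) (Fin n → ZMod 2 × ZMod 2)) := by
        rw [← pow_add, Nat.sub_add_cancel hWle]
    _ = 4 ^ n := by rw [← hVcard, hV4]

/-- Bridge between the natural-number sign exponents and the `ZMod 2` bilinear form. -/
lemma cast_spN (f q : Fin n → Fin 4) :
    ((∑ i, spN (f i) (q i) : ℕ) : ZMod 2) = Bf n (iota f) (iota q) := by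
  rw [Bf_apply]
  push_cast
  exact Finset.sum_congr rfl fun i _ => by
    rw [spN, ZMod.natCast_val, ZMod.cast_id]
    rfl

end Counting

/-- Pointwise cast identity for norms. -/
lemma norm_sq_cast (z : ℂ) : ((‖z‖ : ℝ) : ℂ)^2 = z * star z := by
  rw [← Complex.ofReal_pow, Complex.sq_norm]
  rw [show (star z) = (starRingEnd ℂ) z from rfl, Complex.mul_conj]

/-- for an `n`-qubit pure state `ψ`, the Pauli chiral distance
`C_P(ψ) = −log max_P |⟨ψ*|P|ψ⟩|²` is at most the stabilizer nullity `ν = n − k`, where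
`2^k` is the number of phase-free Pauli strings with `⟨ψ|P|ψ⟩ = ±1`. Equivalently (log
base 2), some Pauli string `P` achieves `|⟨ψ*|P|ψ⟩|² ≥ 2^{−ν}`. -/
theorem stmt_15 {n k : ℕ} (ψ : (Fin n → Fin 2) → ℂ)
    (hψ : ∑ x, ‖ψ x‖ ^ 2 = 1)
    (hcard : Set.ncard {f : Fin n → Fin 4 |
        dotProduct (star ψ) ((PauliString n f).mulVec ψ) = 1 ∨
        dotProduct (star ψ) ((PauliString n f).mulVec ψ) = -1} = 2 ^ k) :
    ∃ f : Fin n → Fin 4,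
      ((2 : ℝ) ^ (n - k))⁻¹
        ≤ ‖dotProduct ψ ((PauliString n f).mulVec ψ)‖ ^ 2 := by
  classical
  by_contra hcon
  push_neg at hcon
  set S : Set (Fin n → Fin 4) := {f : Fin n → Fin 4 |
      dotProduct (star ψ) ((PauliString n f).mulVec ψ) = 1 ∨
      dotProduct (star ψ) ((PauliString n f).mulVec ψ) = -1} with hSdef
  -- normalization, complex form
  have hc1 : ∑ x, ψ x * star (ψ x) = (1:ℂ) := by
    have h2 : ((∑ x, ‖ψ x‖^2 : ℝ) : ℂ) = ∑ x, ψ x * star (ψ x) := by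
      push_cast
      exact Finset.sum_congr rfl fun x _ => norm_sq_cast (ψ x)
    rw [← h2, hψ]
    norm_num
  have hd1 : dotProduct (star ψ) ψ = 1 := by
    rw [dotProduct, ← hc1]
    exact Finset.sum_congr rfl fun x _ => by rw [Pi.star_apply]; ring
  -- the constraint satisfied by the support of the chiral amplitude
  have hconstr : ∀ f : Fin n → Fin 4, amp ψ f ≠ 0 →
      ∀ q ∈ S, Bf n (iota f) (iota q) = ((∑ i, yN (q i) : ℕ) : ZMod 2) := by
    intro f hf q hq
    have hq' : dotProduct (star ψ) ((PauliString n q).mulVec ψ) = 1 ∨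
        dotProduct (star ψ) ((PauliString n q).mulVec ψ) = -1 := hq
    have hε : ∃ ε : ℂ, (ε = 1 ∨ ε = -1) ∧
        dotProduct (star ψ) ((PauliString n q).mulVec ψ) = ε := by
      rcases hq' with h | h
      exacts [⟨1, Or.inl rfl, h⟩, ⟨-1, Or.inr rfl, h⟩]
    obtain ⟨ε, hε1, hε2⟩ := hε
    have heig := eig ψ hd1 q ε hε1 hε2
    have hev := constraint ψ f q ε hε1 heig hf
    have hcast0 : ((∑ i, spN (f i) (q i) + ∑ i, yN (q i) : ℕ) : ZMod 2) = 0 := by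
      obtain ⟨m, hm⟩ := hev
      rw [hm]
      push_cast
      ring_nf
      rw [show ((2:ZMod 2)) = 0 from rfl, mul_zero]
    rw [Nat.cast_add] at hcast0
    have h2 : ((∑ i, spN (f i) (q i) : ℕ) : ZMod 2) = ((∑ i, yN (q i) : ℕ) : ZMod 2) := by
      have hb : ((∑ i, yN (q i) : ℕ) : ZMod 2) + ((∑ i, yN (q i) : ℕ) : ZMod 2) = 0 :=
        CharTwo.add_self_eq_zero _
      linear_combination hcast0 - hb
    rw [cast_spN] at h2
    exact h2
  have hcount := counting k S hcard (fun q => ((∑ i, yN (q i) : ℕ) : ZMod 2))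
  set C : Set (Fin n → Fin 4) :=
    {f : Fin n → Fin 4 | ∀ q ∈ S, Bf n (iota f) (iota q) = ((∑ i, yN (q i) : ℕ) : ZMod 2)}
    with hCdef
  -- Parseval, real form
  have hpars := parseval ψ hc1
  have hreal : ∑ f : Fin n → Fin 4, ‖amp ψ f‖^2 = (2:ℝ)^n := by
    have hcast : ((∑ f : Fin n → Fin 4, ‖amp ψ f‖^2 : ℝ) : ℂ)
        = ∑ f : Fin n → Fin 4, amp ψ f * star (amp ψ f) := by
      push_cast
      exact Finset.sum_congr rfl fun f _ => norm_sq_cast _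
    rw [hpars] at hcast
    have : ((∑ f : Fin n → Fin 4, ‖amp ψ f‖^2 : ℝ) : ℂ) = (((2:ℝ)^n : ℝ) : ℂ) := by
      rw [hcast]; push_cast; ring
    exact_mod_cast this
  have hsupp : ∀ f, f ∉ C → amp ψ f = 0 := by
    intro f hf
    by_contra h0
    exact hf (fun q hq => hconstr f h0 q hq)
  have hsplit : ∑ f : Fin n → Fin 4, ‖amp ψ f‖^2 = ∑ f ∈ C.toFinset, ‖amp ψ f‖^2 := by
    symm
    apply Finset.sum_subset (Finset.subset_univ _)
    intro f _ hf
    rw [hsupp f (by simpa using hf)]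
    simp
  have hCne : C.toFinset.Nonempty := by
    by_contra hempty
    rw [Finset.not_nonempty_iff_eq_empty] at hempty
    rw [hsplit, hempty, Finset.sum_empty] at hreal
    have : (0:ℝ) < 2^n := by positivity
    linarith
  have hlt : ∑ f ∈ C.toFinset, ‖amp ψ f‖^2
      < (C.toFinset.card : ℝ) * ((2:ℝ)^(n-k))⁻¹ := by
    have := Finset.sum_lt_sum_of_nonempty hCne
      (f := fun f => ‖amp ψ f‖^2) (g := fun _ => ((2:ℝ)^(n-k))⁻¹)
      (fun f _ => hcon f)
    simpa [Finset.sum_const, nsmul_eq_mul] using this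
  have hCcard : C.toFinset.card = C.ncard := (Set.ncard_eq_toFinset_card' C).symm
  have hNbound : C.ncard ≤ 2^(n + (n - k)) := by
    have h4 : (4:ℕ)^n = 2^(2*n) := by
      rw [show (4:ℕ) = 2^2 from rfl, ← pow_mul]
    have hle : 2*n ≤ n + (n-k) + k := by omega
    have : C.ncard * 2^k ≤ 2^(n + (n-k)) * 2^k := by
      calc C.ncard * 2^k ≤ 4^n := hcount
        _ = 2^(2*n) := h4
        _ ≤ 2^(n + (n-k) + k) := Nat.pow_le_pow_right (by norm_num) hle
        _ = 2^(n + (n-k)) * 2^k := by rw [pow_add]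
    exact Nat.le_of_mul_le_mul_right this (pow_pos (by norm_num : (0:ℕ) < 2) k)
  have hfin : (C.ncard : ℝ) * ((2:ℝ)^(n-k))⁻¹ ≤ (2:ℝ)^n := by
    have h1 : (C.ncard : ℝ) ≤ (2:ℝ)^(n+(n-k)) := by
      exact_mod_cast Nat.cast_le.mpr hNbound
    have h2 : (0:ℝ) < ((2:ℝ)^(n-k))⁻¹ := by positivity
    calc (C.ncard : ℝ) * ((2:ℝ)^(n-k))⁻¹
        ≤ (2:ℝ)^(n+(n-k)) * ((2:ℝ)^(n-k))⁻¹ := by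
          exact mul_le_mul_of_nonneg_right h1 (le_of_lt h2)
      _ = (2:ℝ)^n := by
          rw [pow_add]
          field_simp
  rw [hsplit] at hreal
  rw [hCcard] at hlt
  linarith
end
end
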